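/- arXiv:1106.4135 — 7 statements merged into one kernel-verified Lean document; each statement's English description precedes it below -/
import Mathlib

section
/- For a Hausdorff topological space X, the following are equivalent: (1) X has a development at non-isolated points; (2) there exists a g-function g for X such that for every non-isolated point x ∈ X^d and all sequences {x_n}, {y_n} in X, if {x, x_n} ⊆ g(n, y_n) for every n ∈ ℕ, then the sequence x_n converges to x; (3) X is quasi-developable and the subspace X^d is perfect. -/
open Set Topology Filter Function

/-- `st(x, 𝒰) = ⋃ {P ∈ 𝒰 : x ∈ P}`. -/
def stpt {X : Type*} (x : X) (𝒰 : Set (Set X)) : Set X := ⋃₀ {P ∈ 𝒰 | x ∈ P}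

/-- The set `X^d` of non-isolated points of `X`. -/
def nonIsolatedPoints (X : Type*) [TopologicalSpace X] : Set X :=
  {x : X | ¬IsOpen ({x} : Set X)}

/-- A development at non-isolated points: a sequence of open covers of `X` such that
the stars at each non-isolated point form a neighborhood base there. -/
def IsDevelopmentAtNonIsolatedPoints {X : Type*} [TopologicalSpace X]
    (𝒰 : ℕ → Set (Set X)) : Prop :=
  (∀ n, ∀ P ∈ 𝒰 n, IsOpen P) ∧ (∀ n, ⋃₀ 𝒰 n = Set.univ) ∧
    ∀ x ∈ nonIsolatedPoints X, ∀ U : Set X, x ∈ U → IsOpen U →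
      ∃ n, stpt x (𝒰 n) ⊆ U

/-- A quasi-development for `X`. -/
def IsQuasiDevelopment {X : Type*} [TopologicalSpace X] (𝒰 : ℕ → Set (Set X)) : Prop :=
  (∀ n, ∀ P ∈ 𝒰 n, IsOpen P) ∧
    ∀ (x : X) (U : Set X), x ∈ U → IsOpen U →
      ∃ n, x ∈ stpt x (𝒰 n) ∧ stpt x (𝒰 n) ⊆ U

/-- A `g`-function for `X`. -/
def IsGFunction {X : Type*} [TopologicalSpace X] (g : ℕ → X → Set X) : Prop :=
  (∀ n x, IsOpen (g n x)) ∧ (∀ n x, x ∈ g n x) ∧ ∀ n x, g (n + 1) x ⊆ g n x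

/-!
A `g`-function and a sequence of open covers carry the same information: `g n y` is a member of
the `n`-th cover containing `y` (intersected with those of the earlier covers, so that `g` is
decreasing), and the sequential condition in (2) says exactly that the stars `st(x, 𝒰ₙ)` shrink
to `x`.

Given a development at non-isolated points, the open singletons supply a quasi-development at the
isolated points, and a closed `C ⊆ X^d` is the intersection of the open stars `st(C, 𝒰ₙ)`.
Conversely, as `X^d` is closed and perfect, `X^d ∩ ⋃ 𝒱ₙ` is a countable union of sets `Fₙₘ`
closed in `X`; adding `X \ Fₙₘ` to `𝒱ₙ` yields an open cover of `X` with the same stars at the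
points of `Fₙₘ`, which turns a quasi-development `𝒱` into a development at non-isolated points.
-/

section Star

variable {X : Type*}

lemma mem_stpt {x y : X} {𝒰 : Set (Set X)} : y ∈ stpt x 𝒰 ↔ ∃ P ∈ 𝒰, x ∈ P ∧ y ∈ P := by
  simp only [stpt, mem_sUnion, mem_sep_iff, and_assoc]

lemma stpt_subset_sUnion (x : X) (𝒰 : Set (Set X)) : stpt x 𝒰 ⊆ ⋃₀ 𝒰 :=
  sUnion_subset_sUnion (sep_subset _ _)

lemma stpt_insert_compl_of_mem {x : X} {F : Set X} (hx : x ∈ F) (𝒰 : Set (Set X)) :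
    stpt x (insert Fᶜ 𝒰) = stpt x 𝒰 := by
  ext y
  simp only [mem_stpt, exists_mem_insert, mem_compl_iff, hx, not_true_eq_false, false_and,
    false_or]

end Star

section Topology

variable {X : Type*} [TopologicalSpace X]

lemma isClosed_nonIsolatedPoints : IsClosed (nonIsolatedPoints X) := by
  refine isOpen_compl_iff.mp <|
    isOpen_iff_forall_mem_open.mpr fun x hx => ⟨{x}, ?_, not_not.mp hx, rfl⟩
  rintro y rfl
  exact hx

lemma exists_stpt_subset_of_tendsto {𝒰 : ℕ → Set (Set X)} {x : X}
    (h : ∀ zs : ℕ → X, (∀ n, zs n ∈ stpt x (𝒰 n)) → Tendsto zs atTop (𝓝 x))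
    {U : Set X} (hU : U ∈ 𝓝 x) : ∃ n, stpt x (𝒰 n) ⊆ U := by
  by_contra! hcon
  choose zs hzs hzU using fun n => not_subset.mp (hcon n)
  obtain ⟨n, hn⟩ := ((h zs hzs).eventually hU).exists
  exact hzU n hn

lemma exists_isGFunction_subset_mem {𝒰 : ℕ → Set (Set X)} (hopen : ∀ n, ∀ P ∈ 𝒰 n, IsOpen P)
    (hcov : ∀ n, ⋃₀ 𝒰 n = univ) :
    ∃ g : ℕ → X → Set X, IsGFunction g ∧ ∀ k n y, k ≤ n → ∃ P ∈ 𝒰 k, g n y ⊆ P := by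
  choose P hP hyP using fun k (y : X) => mem_sUnion.mp (hcov k ▸ mem_univ y)
  refine ⟨fun n y => ⋂ k ∈ Finset.range (n + 1), P k y, ⟨fun n y => ?_, fun n y => ?_, ?_⟩, ?_⟩
  · exact isOpen_biInter_finset fun k _ => hopen k _ (hP k y)
  · exact mem_iInter₂.mpr fun k _ => hyP k y
  · exact fun n y => biInter_subset_biInter_left fun k hk =>
      Finset.mem_range.mpr (Nat.lt_succ_of_lt (Finset.mem_range.mp hk))
  · exact fun k n y hkn =>
      ⟨P k y, hP k y, biInter_subset_of_mem (Finset.mem_range_succ_iff.mpr hkn)⟩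

lemma IsDevelopmentAtNonIsolatedPoints.exists_isGFunction_tendsto {𝒰 : ℕ → Set (Set X)}
    (h : IsDevelopmentAtNonIsolatedPoints 𝒰) :
    ∃ g : ℕ → X → Set X, IsGFunction g ∧
      ∀ x ∈ nonIsolatedPoints X, ∀ xs ys : ℕ → X,
        (∀ n, x ∈ g n (ys n) ∧ xs n ∈ g n (ys n)) → Tendsto xs atTop (𝓝 x) := by
  obtain ⟨hopen, hcov, hbase⟩ := h
  obtain ⟨g, hg, hgP⟩ := exists_isGFunction_subset_mem hopen hcov
  refine ⟨g, hg, fun x hx xs ys hxy => tendsto_nhds.mpr fun U hU hxU => ?_⟩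
  obtain ⟨m, hm⟩ := hbase x hx U hxU hU
  filter_upwards [eventually_ge_atTop m] with n hn
  obtain ⟨P, hP, hgnP⟩ := hgP m n (ys n) hn
  exact hm (mem_stpt.mpr ⟨P, hP, hgnP (hxy n).1, hgnP (hxy n).2⟩)

lemma IsGFunction.isDevelopmentAtNonIsolatedPoints_range {g : ℕ → X → Set X} (hg : IsGFunction g)
    (h : ∀ x ∈ nonIsolatedPoints X, ∀ xs ys : ℕ → X,
      (∀ n, x ∈ g n (ys n) ∧ xs n ∈ g n (ys n)) → Tendsto xs atTop (𝓝 x)) :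
    IsDevelopmentAtNonIsolatedPoints fun n => range (g n) := by
  refine ⟨?_, fun n => eq_univ_of_forall fun x => ⟨g n x, mem_range_self x, hg.2.1 n x⟩, ?_⟩
  · rintro n _ ⟨y, rfl⟩
    exact hg.1 n y
  · refine fun x hx U hxU hU => exists_stpt_subset_of_tendsto (fun zs hzs => ?_) (hU.mem_nhds hxU)
    have hys : ∀ n, ∃ y, x ∈ g n y ∧ zs n ∈ g n y := fun n => by
      obtain ⟨_, ⟨y, rfl⟩, hxy, hzy⟩ := mem_stpt.mp (hzs n)
      exact ⟨y, hxy, hzy⟩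
    choose ys hys using hys
    exact h x hx zs ys hys

lemma IsDevelopmentAtNonIsolatedPoints.isQuasiDevelopment {𝒰 : ℕ → Set (Set X)}
    (h : IsDevelopmentAtNonIsolatedPoints 𝒰) :
    IsQuasiDevelopment fun n => Nat.casesOn n {P : Set X | IsOpen P ∧ P.Subsingleton} 𝒰 := by
  obtain ⟨hopen, hcov, hbase⟩ := h
  refine ⟨fun n => Nat.casesOn n (fun _ hP => hP.1) hopen, fun x U hxU hU => ?_⟩
  by_cases hx : x ∈ nonIsolatedPoints X
  · obtain ⟨n, hn⟩ := hbase x hx U hxU hU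
    obtain ⟨P, hP, hxP⟩ := mem_sUnion.mp (hcov n ▸ mem_univ x)
    exact ⟨n + 1, mem_stpt.mpr ⟨P, hP, hxP, hxP⟩, hn⟩
  · refine ⟨0, mem_stpt.mpr ⟨{x}, ⟨not_not.mp hx, subsingleton_singleton⟩, rfl, rfl⟩, ?_⟩
    intro y hy
    obtain ⟨P, hP, hxP, hyP⟩ := mem_stpt.mp hy
    exact hP.2 hxP hyP ▸ hxU

lemma isGδ_of_isClosed_of_stpt_subset {Y : Set X} {𝒰 : ℕ → Set (Set X)}
    (hopen : ∀ n, ∀ P ∈ 𝒰 n, IsOpen P) (hcov : ∀ n, Y ⊆ ⋃₀ 𝒰 n)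
    (hbase : ∀ x ∈ Y, ∀ U : Set X, x ∈ U → IsOpen U → ∃ n, stpt x (𝒰 n) ⊆ U)
    {C : Set Y} (hC : IsClosed C) : IsGδ C := by
  have hCeq : C = ⋂ n, ((↑) : Y → X) ⁻¹' ⋃₀ {P ∈ 𝒰 n | ∃ c ∈ C, (c : X) ∈ P} := by
    ext p
    simp only [mem_iInter, mem_preimage, mem_sUnion, mem_sep_iff]
    refine ⟨fun hp n => ?_, fun hp => ?_⟩
    · obtain ⟨P, hP, hpP⟩ := hcov n p.2
      exact ⟨P, ⟨hP, p, hp, hpP⟩, hpP⟩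
    · by_contra hpC
      obtain ⟨V, hV, hVC⟩ := isOpen_induced_iff.mp hC.isOpen_compl
      obtain ⟨n, hn⟩ := hbase p p.2 V (by rwa [← mem_preimage, hVC]) hV
      obtain ⟨P, ⟨hP, c, hc, hcP⟩, hpP⟩ := hp n
      have hcV : (c : X) ∈ V := hn (mem_stpt.mpr ⟨P, hP, hpP, hcP⟩)
      exact (hVC ▸ hcV : c ∈ Cᶜ) hc
  rw [hCeq]
  exact .iInter_of_isOpen fun n =>
    (isOpen_sUnion fun P hP => hopen n P hP.1).preimage continuous_subtype_val

lemma exists_isClosed_iUnion_eq_inter {Y : Set X} (hY : IsClosed Y)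
    (hperf : ∀ C : Set Y, IsClosed C → IsGδ C) {V : Set X} (hV : IsOpen V) :
    ∃ F : ℕ → Set X, (∀ m, IsClosed (F m)) ∧ ⋃ m, F m = Y ∩ V := by
  obtain ⟨O, hO, hOeq⟩ :=
    (hperf _ (hV.isClosed_compl.preimage continuous_subtype_val)).eq_iInter_nat
  refine ⟨fun m => (↑) '' (O m)ᶜ, fun m => hY.isClosedMap_subtype_val _ (hO m).isClosed_compl, ?_⟩
  rw [← image_iUnion, ← compl_iInter, ← hOeq, preimage_compl, compl_compl,
    Subtype.image_preimage_val]

lemma IsQuasiDevelopment.isDevelopmentAtNonIsolatedPoints_insert {𝒱 : ℕ → Set (Set X)}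
    (h : IsQuasiDevelopment 𝒱) {F : ℕ → ℕ → Set X} (hF : ∀ n m, IsClosed (F n m))
    (hFeq : ∀ n, ⋃ m, F n m = nonIsolatedPoints X ∩ ⋃₀ 𝒱 n) :
    IsDevelopmentAtNonIsolatedPoints fun k => insert (F k.unpair.1 k.unpair.2)ᶜ (𝒱 k.unpair.1) := by
  refine ⟨fun k => ?_, fun k => eq_univ_of_forall fun x => ?_, fun x hx U hxU hU => ?_⟩
  · rintro P (rfl | hP)
    exacts [(hF _ _).isOpen_compl, h.1 _ P hP]
  · by_cases hxF : x ∈ F k.unpair.1 k.unpair.2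
    · have hx : x ∈ nonIsolatedPoints X ∩ ⋃₀ 𝒱 k.unpair.1 := hFeq _ ▸ mem_iUnion_of_mem _ hxF
      obtain ⟨P, hP, hxP⟩ := hx.2
      exact ⟨P, mem_insert_of_mem _ hP, hxP⟩
    · exact ⟨_, mem_insert _ _, hxF⟩
  · obtain ⟨n, hxst, hst⟩ := h.2 x U hxU hU
    obtain ⟨m, hm⟩ :=
      mem_iUnion.mp ((hFeq n).symm ▸ ⟨hx, stpt_subset_sUnion x _ hxst⟩ : x ∈ ⋃ m, F n m)
    refine ⟨Nat.pair n m, ?_⟩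
    simpa only [Nat.unpair_pair, stpt_insert_compl_of_mem hm] using hst

end Topology

theorem theorem_2_1_general {X : Type*} [TopologicalSpace X] :
    List.TFAE
      [ ∃ 𝒰 : ℕ → Set (Set X), IsDevelopmentAtNonIsolatedPoints 𝒰,
        ∃ g : ℕ → X → Set X, IsGFunction g ∧
          ∀ x ∈ nonIsolatedPoints X, ∀ xs ys : ℕ → X,
            (∀ n, x ∈ g n (ys n) ∧ xs n ∈ g n (ys n)) →
              Filter.Tendsto xs Filter.atTop (nhds x),
        (∃ 𝒰 : ℕ → Set (Set X), IsQuasiDevelopment 𝒰) ∧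
          ∀ C : Set ↥(nonIsolatedPoints X), IsClosed C → IsGδ C ] := by
  tfae_have 1 → 2 := fun ⟨_, h⟩ => h.exists_isGFunction_tendsto
  tfae_have 2 → 1 := fun ⟨_, hg, h⟩ => ⟨_, hg.isDevelopmentAtNonIsolatedPoints_range h⟩
  tfae_have 1 → 3 := fun ⟨_, h⟩ =>
    ⟨⟨_, h.isQuasiDevelopment⟩, fun _ hC =>
      isGδ_of_isClosed_of_stpt_subset h.1 (fun n => (h.2.1 n).symm ▸ subset_univ _) h.2.2 hC⟩
  tfae_have 3 → 1 := fun ⟨⟨_, h𝒱⟩, hperf⟩ => by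
    choose F hF hFeq using fun n =>
      exists_isClosed_iUnion_eq_inter isClosed_nonIsolatedPoints hperf (isOpen_sUnion (h𝒱.1 n))
    exact ⟨_, h𝒱.isDevelopmentAtNonIsolatedPoints_insert hF hFeq⟩
  tfae_finish

/-- Theorem 2.1: For a Hausdorff space `X`, TFAE:
(1) `X` has a development at non-isolated points;
(2) there is a `g`-function such that whenever `x ∈ X^d` and `{x, xₙ} ⊆ g(n, yₙ)`
for all `n`, the sequence `xₙ` converges to `x`;
(3) `X` is quasi-developable and the subspace `X^d` is perfect. -/
theorem theorem_2_1 {X : Type*} [TopologicalSpace X] [T2Space X] :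
    List.TFAE
      [ ∃ 𝒰 : ℕ → Set (Set X), IsDevelopmentAtNonIsolatedPoints 𝒰,
        ∃ g : ℕ → X → Set X, IsGFunction g ∧
          ∀ x ∈ nonIsolatedPoints X, ∀ xs ys : ℕ → X,
            (∀ n, x ∈ g n (ys n) ∧ xs n ∈ g n (ys n)) →
              Filter.Tendsto xs Filter.atTop (nhds x),
        (∃ 𝒰 : ℕ → Set (Set X), IsQuasiDevelopment 𝒰) ∧
          ∀ C : Set ↥(nonIsolatedPoints X), IsClosed C → IsGδ C ] :=
  theorem_2_1_general
end

section
/- If a Hausdorff topological space X has a development at non-isolated points, then there exists a g-function g for X such that for every non-isolated point x ∈ X^d and all sequences {x_n}, {y_n} in X, if {x, x_n} ⊆ g(n, y_n) for every n ∈ ℕ, then the sequence x_n converges to x. -/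
open Set Topology Filter Function

/-! Choose for every `n` and `y` a member `P n y ∈ 𝒰 n` containing `y`, and let `g(n, y)` be
`P 0 y ∩ ⋯ ∩ P n y`. If `x` and `x_n` both lie in `g(n, y_n)`, then for every `m ≤ n` they share
the member `P m y_n` of `𝒰 m`, so `x_n ∈ st(x, 𝒰 m)`; at a non-isolated `x` these stars form a
neighbourhood base. -/

lemma mem_stpt_of_mem {X : Type*} {𝒰 : Set (Set X)} {P : Set X} {x y : X}
    (hP : P ∈ 𝒰) (hx : x ∈ P) (hy : y ∈ P) : y ∈ stpt x 𝒰 :=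
  ⟨P, ⟨hP, hx⟩, hy⟩

lemma isGFunction_biInter_le {X : Type*} [TopologicalSpace X] {P : ℕ → X → Set X}
    (hopen : ∀ i x, IsOpen (P i x)) (hmem : ∀ i x, x ∈ P i x) :
    IsGFunction fun n x => ⋂ i ≤ n, P i x :=
  ⟨fun n x => (finite_le_nat n).isOpen_biInter fun i _ => hopen i x,
    fun _ x => mem_iInter₂.2 fun i _ => hmem i x,
    fun _ _ => biInter_mono (fun _ hi => Nat.le_succ_of_le hi) fun _ _ => subset_rfl⟩

lemma tendsto_of_mem_biInter_le {X : Type*} [TopologicalSpace X] {𝒰 : ℕ → Set (Set X)}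
    {P : ℕ → X → Set X} (hP : ∀ n y, P n y ∈ 𝒰 n) {x : X}
    (hbase : ∀ U : Set X, x ∈ U → IsOpen U → ∃ m, stpt x (𝒰 m) ⊆ U) {xs ys : ℕ → X}
    (hxy : ∀ n, x ∈ ⋂ i ≤ n, P i (ys n) ∧ xs n ∈ ⋂ i ≤ n, P i (ys n)) :
    Tendsto xs atTop (𝓝 x) := by
  rw [tendsto_atTop_nhds]
  intro U hxU hU
  obtain ⟨m, hm⟩ := hbase U hxU hU
  refine ⟨m, fun n hmn => hm ?_⟩
  obtain ⟨hx, hxs⟩ := hxy n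
  exact mem_stpt_of_mem (hP m (ys n)) (mem_iInter₂.1 hx m hmn) (mem_iInter₂.1 hxs m hmn)

theorem theorem_2_1_1_implies_2_general {X : Type*} [TopologicalSpace X]
    (h : ∃ 𝒰 : ℕ → Set (Set X), IsDevelopmentAtNonIsolatedPoints 𝒰) :
    ∃ g : ℕ → X → Set X, IsGFunction g ∧
      ∀ x ∈ nonIsolatedPoints X, ∀ xs ys : ℕ → X,
        (∀ n, x ∈ g n (ys n) ∧ xs n ∈ g n (ys n)) →
          Filter.Tendsto xs Filter.atTop (nhds x) := by
  obtain ⟨𝒰, hopen, hcover, hbase⟩ := h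
  have hP : ∀ n (y : X), ∃ P ∈ 𝒰 n, y ∈ P := fun n y => by
    simpa only [← mem_sUnion, hcover n] using mem_univ y
  choose P hP𝒰 hPy using hP
  exact ⟨fun n y => ⋂ i ≤ n, P i y,
    isGFunction_biInter_le (fun n y => hopen n _ (hP𝒰 n y)) hPy,
    fun x hx _ _ hxy => tendsto_of_mem_biInter_le hP𝒰 (hbase x hx) hxy⟩

/-- Theorem 2.1, (1) ⇒ (2). -/
theorem theorem_2_1_1_implies_2 {X : Type*} [TopologicalSpace X] [T2Space X]
    (h : ∃ 𝒰 : ℕ → Set (Set X), IsDevelopmentAtNonIsolatedPoints 𝒰) :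
    ∃ g : ℕ → X → Set X, IsGFunction g ∧
      ∀ x ∈ nonIsolatedPoints X, ∀ xs ys : ℕ → X,
        (∀ n, x ∈ g n (ys n) ∧ xs n ∈ g n (ys n)) →
          Filter.Tendsto xs Filter.atTop (nhds x) :=
  theorem_2_1_1_implies_2_general h
end

section
/- Let X be a Hausdorff topological space admitting a g-function g such that for every non-isolated point x ∈ X^d and all sequences {x_n}, {y_n} in X with {x, x_n} ⊆ g(n, y_n) for every n ∈ ℕ, the sequence x_n converges to x. Then X is quasi-developable and the subspace X^d is perfect (every closed subset of X^d is a Gδ-set in X^d). -/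
open Set Topology Filter Function

/-!
The sets `g n y` with `x ∈ g n y` shrink to `x` at every non-isolated `x`, so the covers
`{g n y : y ∈ X}`, preceded by the cover of isolated points by their singletons, form a
quasi-development. On `X^d`, taking `xs = ys` shows that `x ∈ g n (ys n)` for all `n` forces
`ys n → x`; hence a closed `C ⊆ X^d` is the intersection of the open sets `⋃ y ∈ C, g n y`.
-/

lemma mem_stpt_range_iff {X ι : Type*} {f : ι → Set X} {x z : X} :
    z ∈ stpt x (range f) ↔ ∃ i, x ∈ f i ∧ z ∈ f i := by
  simp [stpt, and_assoc]

lemma mem_stpt_range_self {X : Type*} {g : X → Set X} (hmem : ∀ x, x ∈ g x) (x : X) :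
    x ∈ stpt x (range g) :=
  mem_stpt_range_iff.2 ⟨x, hmem x, hmem x⟩

lemma exists_stpt_range_subset_of_tendsto {X : Type*} [TopologicalSpace X]
    {g : ℕ → X → Set X} {x : X}
    (hconv : ∀ xs ys : ℕ → X, (∀ n, x ∈ g n (ys n) ∧ xs n ∈ g n (ys n)) →
      Tendsto xs atTop (𝓝 x))
    {U : Set X} (hU : U ∈ 𝓝 x) : ∃ n, stpt x (range (g n)) ⊆ U := by
  by_contra! hnot
  have hout : ∀ n, ∃ y z, (x ∈ g n y ∧ z ∈ g n y) ∧ z ∉ U := fun n => by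
    obtain ⟨z, hz, hzU⟩ := not_subset.1 (hnot n)
    obtain ⟨y, hy⟩ := mem_stpt_range_iff.1 hz
    exact ⟨y, z, hy, hzU⟩
  choose ys zs hyz hzU using hout
  obtain ⟨n, hn⟩ := ((hconv zs ys hyz).eventually hU).exists
  exact hzU n hn

def isolatedSingletons (X : Type*) [TopologicalSpace X] : Set (Set X) :=
  (fun x => {x}) '' {x | IsOpen ({x} : Set X)}

lemma stpt_isolatedSingletons {X : Type*} [TopologicalSpace X] {x : X}
    (hx : IsOpen ({x} : Set X)) : stpt x (isolatedSingletons X) = {x} := by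
  ext z
  simp only [stpt, isolatedSingletons, mem_sUnion, mem_ofPred_eq, mem_image,
    mem_singleton_iff]
  constructor
  · rintro ⟨_, ⟨⟨w, -, rfl⟩, rfl⟩, rfl⟩
    rfl
  · rintro rfl
    exact ⟨{z}, ⟨⟨z, hx, rfl⟩, rfl⟩, rfl⟩

def quasiDevelopmentOfGFunction {X : Type*} [TopologicalSpace X] (g : ℕ → X → Set X) :
    ℕ → Set (Set X)
  | 0 => isolatedSingletons X
  | n + 1 => range (g n)

lemma isQuasiDevelopment_quasiDevelopmentOfGFunction {X : Type*} [TopologicalSpace X]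
    {g : ℕ → X → Set X} (hopen : ∀ n x, IsOpen (g n x)) (hmem : ∀ n x, x ∈ g n x)
    (hconv : ∀ x ∈ nonIsolatedPoints X, ∀ xs ys : ℕ → X,
      (∀ n, x ∈ g n (ys n) ∧ xs n ∈ g n (ys n)) → Tendsto xs atTop (𝓝 x)) :
    IsQuasiDevelopment (quasiDevelopmentOfGFunction g) := by
  refine ⟨?_, fun x U hxU hU => ?_⟩
  · rintro (_ | n) P hP
    · obtain ⟨x, hx, rfl⟩ := hP
      exact hx
    · obtain ⟨y, rfl⟩ := hP
      exact hopen n y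
  by_cases hx : IsOpen ({x} : Set X)
  · refine ⟨0, ?_⟩
    simpa only [quasiDevelopmentOfGFunction, stpt_isolatedSingletons hx, mem_singleton_iff,
      true_and, singleton_subset_iff] using hxU
  · obtain ⟨n, hn⟩ := exists_stpt_range_subset_of_tendsto (hconv x hx) (hU.mem_nhds hxU)
    exact ⟨n + 1, mem_stpt_range_self (hmem n) x, hn⟩

lemma IsClosed.isGδ_of_tendsto {Y : Type*} [TopologicalSpace Y] {g : ℕ → Y → Set Y}
    (hopen : ∀ n y, IsOpen (g n y)) (hmem : ∀ n y, y ∈ g n y)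
    (hconv : ∀ (x : Y) (ys : ℕ → Y), (∀ n, x ∈ g n (ys n)) → Tendsto ys atTop (𝓝 x))
    {C : Set Y} (hC : IsClosed C) : IsGδ C := by
  suffices hCeq : C = ⋂ n, ⋃ y ∈ C, g n y by
    rw [hCeq]
    exact IsGδ.iInter_of_isOpen fun n => isOpen_biUnion fun y _ => hopen n y
  refine Subset.antisymm (fun x hx => mem_iInter.2 fun n => mem_biUnion hx (hmem n x)) ?_
  intro x hx
  simp only [mem_iInter, mem_iUnion] at hx
  choose ys hysC hxg using hx
  exact hC.mem_of_tendsto (hconv x ys hxg) (Eventually.of_forall hysC)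

theorem theorem_2_1_2_implies_3_general {X : Type*} [TopologicalSpace X]
    (g : ℕ → X → Set X) (hg : IsGFunction g)
    (hconv : ∀ x ∈ nonIsolatedPoints X, ∀ xs ys : ℕ → X,
      (∀ n, x ∈ g n (ys n) ∧ xs n ∈ g n (ys n)) →
        Filter.Tendsto xs Filter.atTop (nhds x)) :
    (∃ 𝒰 : ℕ → Set (Set X), IsQuasiDevelopment 𝒰) ∧
      ∀ C : Set ↥(nonIsolatedPoints X), IsClosed C → IsGδ C := by
  obtain ⟨hopen, hmem, -⟩ := hg
  have hconv_subtype : ∀ (x : nonIsolatedPoints X) (ys : ℕ → nonIsolatedPoints X),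
      (∀ n, x ∈ Subtype.val ⁻¹' g n (ys n)) → Tendsto ys atTop (𝓝 x) := fun x ys hx =>
    tendsto_subtype_rng.2 <| hconv x x.2 _ _ fun n => ⟨hx n, hmem n (ys n)⟩
  exact ⟨⟨_, isQuasiDevelopment_quasiDevelopmentOfGFunction hopen hmem hconv⟩,
    fun C hC => hC.isGδ_of_tendsto (g := fun n y => Subtype.val ⁻¹' g n y)
      (fun n y => (hopen n y).preimage continuous_subtype_val) (fun n y => hmem n y)
      hconv_subtype⟩

/-- Theorem 2.1, (2) ⇒ (3). -/
theorem theorem_2_1_2_implies_3 {X : Type*} [TopologicalSpace X] [T2Space X]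
    (g : ℕ → X → Set X) (hg : IsGFunction g)
    (hconv : ∀ x ∈ nonIsolatedPoints X, ∀ xs ys : ℕ → X,
      (∀ n, x ∈ g n (ys n) ∧ xs n ∈ g n (ys n)) →
        Filter.Tendsto xs Filter.atTop (nhds x)) :
    (∃ 𝒰 : ℕ → Set (Set X), IsQuasiDevelopment 𝒰) ∧
      ∀ C : Set ↥(nonIsolatedPoints X), IsClosed C → IsGδ C :=
  theorem_2_1_2_implies_3_general g hg hconv
end

section
/- For a Hausdorff topological space X, the subspace X^d of non-isolated points is metacompact if and only if every open cover of X has an open refinement that is point-finite at non-isolated points. -/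
open Set Topology Filter Function

/-- A topological space is metacompact if every open cover has a point-finite
open refinement. -/
def IsMetacompactSpace (Y : Type*) [TopologicalSpace Y] : Prop :=
  ∀ 𝒰 : Set (Set Y), (∀ U ∈ 𝒰, IsOpen U) → ⋃₀ 𝒰 = Set.univ →
    ∃ 𝒱 : Set (Set Y), (∀ V ∈ 𝒱, IsOpen V) ∧ ⋃₀ 𝒱 = Set.univ ∧
      (∀ V ∈ 𝒱, ∃ U ∈ 𝒰, V ⊆ U) ∧ ∀ y : Y, {V ∈ 𝒱 | y ∈ V}.Finite

/-! Open sets of the subspace `X^d` lift to open sets of `X`, and every point off `X^d` is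
isolated, so its singleton is open and meets `X^d` in nothing. Hence a cover of either space
becomes a cover of the other by lifting (resp. restricting) its members and adding the
singletons of isolated points; these extra members never contain a non-isolated point, so
point-finiteness on `X^d` passes back and forth. -/

section

variable {X : Type*} {S : Set X}

theorem sUnion_union_image_singleton_compl {𝒜 : Set (Set X)} (h𝒜 : S ⊆ ⋃₀ 𝒜) :
    ⋃₀ (𝒜 ∪ (fun y => {y}) '' Sᶜ) = univ := by
  refine eq_univ_of_forall fun x => ?_
  by_cases hx : x ∈ S
  · obtain ⟨A, hA, hxA⟩ := h𝒜 hx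
    exact ⟨A, Or.inl hA, hxA⟩
  · exact ⟨{x}, Or.inr ⟨x, hx, rfl⟩, rfl⟩

theorem notMem_of_mem_image_singleton_compl {V : Set X} (hV : V ∈ (fun y => {y}) '' Sᶜ)
    {x : X} (hx : x ∈ S) : x ∉ V := by
  obtain ⟨y, hy, rfl⟩ := hV
  rintro rfl
  exact hy hx

theorem sUnion_image_preimage_val {𝒰 : Set (Set X)} (h𝒰 : ⋃₀ 𝒰 = univ) :
    ⋃₀ (preimage Subtype.val '' 𝒰 : Set (Set S)) = univ :=
  eq_univ_of_forall fun x => by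
    obtain ⟨U, hU, hxU⟩ := h𝒰.symm ▸ mem_univ (x : X)
    exact ⟨_, mem_image_of_mem _ hU, hxU⟩

variable [TopologicalSpace X]

theorem notMem_nonIsolatedPoints_iff {x : X} :
    x ∉ nonIsolatedPoints X ↔ IsOpen ({x} : Set X) :=
  not_not

theorem exists_isOpen_subset_preimage_val_eq {W : Set S} (hW : IsOpen W) {U : Set X}
    (hU : IsOpen U) (hWU : W ⊆ Subtype.val ⁻¹' U) :
    ∃ G : Set X, IsOpen G ∧ G ⊆ U ∧ Subtype.val ⁻¹' G = W := by
  obtain ⟨O, hO, rfl⟩ := isOpen_induced_iff.mp hW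
  exact ⟨O ∩ U, hO.inter hU, inter_subset_right, by rwa [preimage_inter, inter_eq_left]⟩

variable (S) in
def HasOpenRefinementPointFiniteOn : Prop :=
  ∀ 𝒰 : Set (Set X), (∀ U ∈ 𝒰, IsOpen U) → ⋃₀ 𝒰 = univ →
    ∃ 𝒱 : Set (Set X), (∀ V ∈ 𝒱, IsOpen V) ∧ ⋃₀ 𝒱 = univ ∧
      (∀ V ∈ 𝒱, ∃ U ∈ 𝒰, V ⊆ U) ∧ ∀ x ∈ S, {V ∈ 𝒱 | x ∈ V}.Finite

namespace HasOpenRefinementPointFiniteOn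

variable (hS : ∀ y ∉ S, IsOpen ({y} : Set X))
include hS

theorem of_isMetacompactSpace (h : IsMetacompactSpace S) : HasOpenRefinementPointFiniteOn S := by
  intro 𝒰 h𝒰open h𝒰cov
  obtain ⟨𝒲, h𝒲open, h𝒲cov, h𝒲ref, h𝒲fin⟩ := h (preimage Subtype.val '' 𝒰)
    (by rintro _ ⟨U, hU, rfl⟩; exact (h𝒰open U hU).preimage continuous_subtype_val)
    (sUnion_image_preimage_val h𝒰cov)
  have hlift : ∀ W ∈ 𝒲, ∃ G : Set X, IsOpen G ∧ (∃ U ∈ 𝒰, G ⊆ U) ∧ Subtype.val ⁻¹' G = W := by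
    intro W hW
    obtain ⟨_, ⟨U, hU, rfl⟩, hWU⟩ := h𝒲ref W hW
    obtain ⟨G, hG, hGU, hGW⟩ :=
      exists_isOpen_subset_preimage_val_eq (h𝒲open W hW) (h𝒰open U hU) hWU
    exact ⟨G, hG, ⟨U, hU, hGU⟩, hGW⟩
  choose! G hGopen hGref hGW using hlift
  refine ⟨G '' 𝒲 ∪ (fun y => {y}) '' Sᶜ, ?_, ?_, ?_, ?_⟩
  · rintro _ (⟨W, hW, rfl⟩ | ⟨y, hy, rfl⟩)
    exacts [hGopen W hW, hS y hy]
  · refine sUnion_union_image_singleton_compl fun x hx => ?_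
    obtain ⟨W, hW, hxW⟩ := h𝒲cov.symm ▸ mem_univ (⟨x, hx⟩ : S)
    exact ⟨G W, mem_image_of_mem G hW, by rwa [← hGW W hW] at hxW⟩
  · rintro _ (⟨W, hW, rfl⟩ | ⟨y, -, rfl⟩)
    · exact hGref W hW
    · obtain ⟨U, hU, hyU⟩ := h𝒰cov.symm ▸ mem_univ y
      exact ⟨U, hU, singleton_subset_iff.mpr hyU⟩
  · intro x hx
    refine ((h𝒲fin ⟨x, hx⟩).image G).subset ?_
    rintro V ⟨⟨W, hW, rfl⟩ | hV, hxV⟩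
    · exact ⟨W, ⟨hW, hGW W hW ▸ hxV⟩, rfl⟩
    · exact absurd hxV (notMem_of_mem_image_singleton_compl hV hx)

theorem isMetacompactSpace (h : HasOpenRefinementPointFiniteOn S) : IsMetacompactSpace S := by
  intro 𝒰 h𝒰open h𝒰cov
  choose! O hOopen hOU using fun U hU => isOpen_induced_iff.mp (h𝒰open U hU)
  obtain ⟨𝒱, h𝒱open, h𝒱cov, h𝒱ref, h𝒱fin⟩ := h (O '' 𝒰 ∪ (fun y => {y}) '' Sᶜ)
    (by rintro _ (⟨U, hU, rfl⟩ | ⟨y, hy, rfl⟩); exacts [hOopen U hU, hS y hy])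
    (sUnion_union_image_singleton_compl fun x hx => by
      obtain ⟨U, hU, hxU⟩ := h𝒰cov.symm ▸ mem_univ (⟨x, hx⟩ : S)
      exact ⟨O U, mem_image_of_mem O hU, by rwa [← hOU U hU] at hxU⟩)
  -- members of `𝒱` inside an isolated singleton are discarded: their trace on `S` is empty
  refine ⟨preimage Subtype.val '' {V ∈ 𝒱 | (Subtype.val ⁻¹' V : Set S).Nonempty},
    ?_, ?_, ?_, ?_⟩
  · rintro _ ⟨V, ⟨hV, -⟩, rfl⟩
    exact (h𝒱open V hV).preimage continuous_subtype_val
  · refine eq_univ_of_forall fun x => ?_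
    obtain ⟨V, hV, hxV⟩ := h𝒱cov.symm ▸ mem_univ (x : X)
    exact ⟨_, ⟨V, ⟨hV, x, hxV⟩, rfl⟩, hxV⟩
  · rintro _ ⟨V, ⟨hV, x, hxV⟩, rfl⟩
    obtain ⟨B, ⟨U, hU, rfl⟩ | hB, hVB⟩ := h𝒱ref V hV
    · exact ⟨U, hU, hOU U hU ▸ preimage_mono hVB⟩
    · exact absurd (hVB hxV) (notMem_of_mem_image_singleton_compl hB x.2)
  · intro x
    refine ((h𝒱fin x x.2).image (preimage Subtype.val)).subset ?_
    rintro _ ⟨⟨V, ⟨hV, -⟩, rfl⟩, hxV⟩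
    exact ⟨V, ⟨hV, hxV⟩, rfl⟩

end HasOpenRefinementPointFiniteOn

theorem isMetacompactSpace_iff_hasOpenRefinementPointFiniteOn
    (hS : ∀ y ∉ S, IsOpen ({y} : Set X)) :
    IsMetacompactSpace S ↔ HasOpenRefinementPointFiniteOn S :=
  ⟨HasOpenRefinementPointFiniteOn.of_isMetacompactSpace hS,
    HasOpenRefinementPointFiniteOn.isMetacompactSpace hS⟩

end

theorem lemma_3_1_general {X : Type*} [TopologicalSpace X] :
    IsMetacompactSpace ↥(nonIsolatedPoints X) ↔
      ∀ 𝒰 : Set (Set X), (∀ U ∈ 𝒰, IsOpen U) → ⋃₀ 𝒰 = Set.univ →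
        ∃ 𝒱 : Set (Set X), (∀ V ∈ 𝒱, IsOpen V) ∧ ⋃₀ 𝒱 = Set.univ ∧
          (∀ V ∈ 𝒱, ∃ U ∈ 𝒰, V ⊆ U) ∧
          ∀ x ∈ nonIsolatedPoints X, {V ∈ 𝒱 | x ∈ V}.Finite :=
  isMetacompactSpace_iff_hasOpenRefinementPointFiniteOn fun _ => notMem_nonIsolatedPoints_iff.mp

/-- Lemma 3.1: For a Hausdorff space `X`, `X^d` is a metacompact subspace of `X`
iff every open cover of `X` has an open refinement which is point-finite at
non-isolated points. -/
theorem lemma_3_1 {X : Type*} [TopologicalSpace X] [T2Space X] :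
    IsMetacompactSpace ↥(nonIsolatedPoints X) ↔
      ∀ 𝒰 : Set (Set X), (∀ U ∈ 𝒰, IsOpen U) → ⋃₀ 𝒰 = Set.univ →
        ∃ 𝒱 : Set (Set X), (∀ V ∈ 𝒱, IsOpen V) ∧ ⋃₀ 𝒱 = Set.univ ∧
          (∀ V ∈ 𝒱, ∃ U ∈ 𝒰, V ⊆ U) ∧
          ∀ x ∈ nonIsolatedPoints X, {V ∈ 𝒱 | x ∈ V}.Finite :=
  lemma_3_1_general
end

section
/- Let M be a metric space, X a Hausdorff topological space, and f : M → X a continuous open surjection such that the boundary ∂f⁻¹(x) of each fiber is compact. Then the subspace X^d of non-isolated points of X is metacompact. -/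
open Set Topology Filter Function

/-!
Over a non-isolated point `x` the fiber `f⁻¹(x)` of an open map has empty interior (otherwise
its image `{x}` would be open), so the closed fiber coincides with its boundary and is compact.
Hence `f` restricts to a continuous open surjection with compact fibers from the metric, hence
paracompact, space `f⁻¹(X^d)` onto `X^d`. Pushing forward a locally finite open refinement of the
pulled-back cover gives a point-finite open refinement, since a compact fiber meets only finitely
many members of a locally finite family.
-/

theorem IsOpenQuotientMap.isMetacompactSpace {Z Y : Type*} [TopologicalSpace Z]
    [ParacompactSpace Z] [TopologicalSpace Y] {g : Z → Y} (hg : IsOpenQuotientMap g)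
    (hfib : ∀ y : Y, IsCompact (g ⁻¹' {y})) : IsMetacompactSpace Y := by
  intro 𝒰 hUo hUc
  obtain ⟨v, hvo, hvc, hvlf, hvsub⟩ := precise_refinement
    (fun U : 𝒰 => g ⁻¹' (U : Set Y)) (fun U => (hUo U U.2).preimage hg.continuous)
    (by simpa [← preimage_iUnion, ← sUnion_eq_iUnion] using congrArg (g ⁻¹' ·) hUc)
  refine ⟨range fun U : 𝒰 => g '' v U, ?_, ?_, ?_, fun y => ?_⟩
  · rintro _ ⟨U, rfl⟩
    exact hg.isOpenMap _ (hvo U)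
  · rw [sUnion_range, ← image_iUnion, hvc, image_univ, hg.surjective.range_eq]
  · rintro _ ⟨U, rfl⟩
    exact ⟨U, U.2, image_subset_iff.2 (hvsub U)⟩
  · refine ((hvlf.finite_nonempty_inter_compact (hfib y)).image fun U => g '' v U).subset ?_
    rintro _ ⟨⟨U, rfl⟩, z, hz, hgz⟩
    exact ⟨U, ⟨z, hz, hgz⟩, rfl⟩

section Fibers

variable {M X : Type*} [TopologicalSpace M] [TopologicalSpace X] {f : M → X} {x : X}

theorem IsOpenMap.interior_preimage_singleton_eq_empty (ho : IsOpenMap f)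
    (hx : x ∈ nonIsolatedPoints X) : interior (f ⁻¹' {x}) = ∅ := by
  refine eq_empty_of_forall_notMem fun m hm => hx ?_
  have himage : f '' interior (f ⁻¹' {x}) = {x} :=
    (image_subset_iff.2 interior_subset).antisymm
      (singleton_subset_iff.2 ⟨m, hm, interior_subset (s := f ⁻¹' {x}) hm⟩)
  exact himage ▸ ho _ isOpen_interior

theorem IsOpenMap.frontier_preimage_singleton [T1Space X] (ho : IsOpenMap f) (hf : Continuous f)
    (hx : x ∈ nonIsolatedPoints X) : frontier (f ⁻¹' {x}) = f ⁻¹' {x} := by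
  rw [frontier, (isClosed_singleton.preimage hf).closure_eq,
    ho.interior_preimage_singleton_eq_empty hx, sdiff_empty]

end Fibers

/-- Lemma 3.2, (1) ⇒ (4), second half: if `X` is the image of a metric space under
a continuous open boundary-compact surjection, then `X^d` is metacompact. -/
theorem lemma_3_2_1_implies_metacompact {M X : Type*} [MetricSpace M]
    [TopologicalSpace X] [T2Space X] (f : M → X)
    (hf : Continuous f) (ho : IsOpenMap f) (hs : Function.Surjective f)
    (hb : ∀ x : X, IsCompact (frontier (f ⁻¹' {x}))) :
    IsMetacompactSpace ↥(nonIsolatedPoints X) := by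
  have hq : IsOpenQuotientMap f := ⟨hs, hf, ho⟩
  refine (hq.restrictPreimage (nonIsolatedPoints X)).isMetacompactSpace fun y => ?_
  rw [IsEmbedding.subtypeVal.isCompact_iff, image_val_preimage_restrictPreimage, image_singleton,
    ← ho.frontier_preimage_singleton hf y.2]
  exact hb y
end

section
/- There exist Hausdorff topological spaces X and Y and a continuous closed surjection f : X → Y such that X is regular and has a uniform base at non-isolated points, Y is first-countable, and f is not boundary-compact, i.e., there exists y ∈ Y for which the boundary ∂f⁻¹(y) is not compact. (Such an example is given by the quotient map of the Isbell–Mrówka space ψ(ℕ) = 𝒜 ∪ ℕ, for a maximal almost disjoint family 𝒜 of infinite subsets of ℕ, collapsing 𝒜 to a single point.) -/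
open Set Topology Filter Function

/-- A uniform base at non-isolated points for `X`. -/
def IsUniformBaseAtNonIsolatedPoints {X : Type*} [TopologicalSpace X]
    (𝒰 : Set (Set X)) : Prop :=
  TopologicalSpace.IsTopologicalBasis 𝒰 ∧
    ∀ x ∈ nonIsolatedPoints X, ∀ 𝒰' ⊆ {P ∈ 𝒰 | x ∈ P}, 𝒰'.Countable → 𝒰'.Infinite →
      ∀ U : Set X, x ∈ U → IsOpen U → ∃ P ∈ 𝒰', P ⊆ U

/-!
In `ψ(ℕ)` the tails `{A} ∪ (A \ [0, m))` of the points `A ∈ 𝒜` are clopen because `𝒜` is almost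
disjoint, so together with the isolated points of `ℕ` they form a clopen base; it is uniform at
the points of `𝒜` because the tails of each `A` decrease. Collapsing `𝒜` to one point gives the
one-point compactification of `ℕ`, which is first countable, and the quotient map is closed
because, by maximality, a closed set missing `𝒜` meets `ℕ` in a finite set. The fibre over `∞`
is `𝒜` itself: it is closed with empty interior (every `A` is infinite), so it is its own
boundary, and it is an infinite closed discrete set, hence not compact.
-/

section AlmostDisjoint

variable {α : Type*}

def IsAlmostDisjoint (𝒜 : Set (Set α)) : Prop :=
  (∀ A ∈ 𝒜, A.Infinite) ∧ 𝒜.Pairwise fun A B => (A ∩ B).Finite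

/-- Maximality among almost disjoint families, in its usual equivalent form. -/
def IsMaxAlmostDisjoint (𝒜 : Set (Set α)) : Prop :=
  IsAlmostDisjoint 𝒜 ∧ ∀ B : Set α, B.Infinite → ∃ A ∈ 𝒜, (A ∩ B).Infinite

theorem IsAlmostDisjoint.insert {𝒜 : Set (Set α)} {B : Set α} (h𝒜 : IsAlmostDisjoint 𝒜)
    (hB : B.Infinite) (hB𝒜 : ∀ A ∈ 𝒜, (A ∩ B).Finite) :
    IsAlmostDisjoint (insert B 𝒜) :=
  ⟨forall_mem_insert.mpr ⟨hB, h𝒜.1⟩, pairwise_insert.mpr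
    ⟨h𝒜.2, fun A hA _ => ⟨inter_comm A B ▸ hB𝒜 A hA, hB𝒜 A hA⟩⟩⟩

theorem isAlmostDisjoint_sUnion_of_isChain {c : Set (Set (Set α))}
    (hc : ∀ 𝒜 ∈ c, IsAlmostDisjoint 𝒜) (hchain : IsChain (· ⊆ ·) c) :
    IsAlmostDisjoint (⋃₀ c) :=
  ⟨fun _ ⟨𝒜, h𝒜, hA⟩ => (hc 𝒜 h𝒜).1 _ hA,
    (pairwise_sUnion hchain.directedOn).mpr fun 𝒜 h𝒜 => (hc 𝒜 h𝒜).2⟩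

theorem IsAlmostDisjoint.exists_isMaxAlmostDisjoint_superset {𝒜 : Set (Set α)}
    (h𝒜 : IsAlmostDisjoint 𝒜) : ∃ ℬ, 𝒜 ⊆ ℬ ∧ IsMaxAlmostDisjoint ℬ := by
  obtain ⟨ℬ, h𝒜ℬ, hℬ⟩ := zorn_subset_nonempty {ℬ | IsAlmostDisjoint ℬ}
    (fun c hc hchain _ => ⟨⋃₀ c, isAlmostDisjoint_sUnion_of_isChain hc hchain,
      fun _ => subset_sUnion_of_mem⟩) 𝒜 h𝒜
  refine ⟨ℬ, h𝒜ℬ, hℬ.prop, fun B hB => ?_⟩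
  by_contra! hBℬ
  have hBnotMem : B ∉ ℬ := fun hBmem => hB (by simpa using hBℬ B hBmem)
  exact hBnotMem (hℬ.mem_of_prop_insert (hℬ.prop.insert hB hBℬ))

theorem isAlmostDisjoint_range_range_pair :
    IsAlmostDisjoint (range fun k => range (Nat.pair k)) := by
  refine ⟨forall_mem_range.mpr fun k => infinite_range_of_injective
    fun _ _ h => (Nat.pair_eq_pair.mp h).2, ?_⟩
  rintro _ ⟨k, rfl⟩ _ ⟨l, rfl⟩ hkl
  convert finite_empty
  refine eq_empty_of_forall_notMem fun n ⟨⟨i, hi⟩, ⟨j, hj⟩⟩ => hkl ?_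
  rw [(Nat.pair_eq_pair.mp (hi.trans hj.symm)).1]

theorem exists_infinite_isMaxAlmostDisjoint :
    ∃ 𝒜 : Set (Set ℕ), 𝒜.Infinite ∧ IsMaxAlmostDisjoint 𝒜 := by
  obtain ⟨𝒜, hsub, h𝒜⟩ :=
    isAlmostDisjoint_range_range_pair.exists_isMaxAlmostDisjoint_superset
  refine ⟨𝒜, (infinite_range_of_injective fun k l hkl => ?_).mono hsub, h𝒜⟩
  obtain ⟨i, hi⟩ : Nat.pair k 0 ∈ range (Nat.pair l) := hkl ▸ mem_range_self 0
  exact (Nat.pair_eq_pair.mp hi).1.symm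

end AlmostDisjoint

open scoped OnePoint

inductive MrowkaSpace (𝒜 : Set (Set ℕ)) : Type
  | ofSet (A : 𝒜)
  | ofNat (n : ℕ)

namespace MrowkaSpace

variable {𝒜 : Set (Set ℕ)}

instance : TopologicalSpace (MrowkaSpace 𝒜) where
  IsOpen U := ∀ a : 𝒜, ofSet a ∈ U → ((a : Set ℕ) \ ofNat ⁻¹' U).Finite
  isOpen_univ _ _ := by simp
  isOpen_inter U V hU hV a ha := by
    rw [preimage_inter, sdiff_inter]
    exact (hU a ha.1).union (hV a ha.2)
  isOpen_sUnion s hs := by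
    rintro a ⟨U, hU, haU⟩
    exact (hs U hU a haU).subset
      (sdiff_subset_sdiff_right (preimage_mono (subset_sUnion_of_mem hU)))

theorem isOpen_iff {U : Set (MrowkaSpace 𝒜)} :
    IsOpen U ↔ ∀ a : 𝒜, ofSet a ∈ U → ((a : Set ℕ) \ ofNat ⁻¹' U).Finite :=
  Iff.rfl

theorem isOpen_of_forall_ofSet_notMem {U : Set (MrowkaSpace 𝒜)} (h : ∀ a, ofSet a ∉ U) :
    IsOpen U :=
  fun a ha => absurd ha (h a)

theorem isOpen_singleton_ofNat (n : ℕ) : IsOpen ({ofNat n} : Set (MrowkaSpace 𝒜)) :=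
  isOpen_of_forall_ofSet_notMem fun _ => by simp

instance : T1Space (MrowkaSpace 𝒜) where
  t1
  | ofSet a => isOpen_compl_iff.mp fun b _ => finite_empty.subset fun k hk => by simp at hk
  | ofNat n => isOpen_compl_iff.mp fun b _ => (finite_singleton n).subset fun k hk => by
      simpa using hk.2

def tail (a : 𝒜) (m : ℕ) : Set (MrowkaSpace 𝒜) :=
  insert (ofSet a) (ofNat '' {k ∈ (a : Set ℕ) | m ≤ k})

@[simp]
theorem ofSet_mem_tail {a b : 𝒜} {m : ℕ} : ofSet b ∈ tail a m ↔ b = a := by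
  simp [tail]

@[simp]
theorem ofNat_mem_tail {a : 𝒜} {m k : ℕ} :
    ofNat k ∈ tail a m ↔ k ∈ (a : Set ℕ) ∧ m ≤ k := by
  simp [tail]

theorem tail_anti (a : 𝒜) : Antitone (tail a) := by
  rintro m l hml (b | k)
  · simp
  · simpa using fun hk hlk => ⟨hk, hml.trans hlk⟩

theorem isOpen_tail (a : 𝒜) (m : ℕ) : IsOpen (tail a m) := by
  intro b hb
  obtain rfl := ofSet_mem_tail.mp hb
  exact (finite_Iio m).subset fun k ⟨hk, hkm⟩ => by simpa [hk] using hkm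

theorem isClosed_tail (h𝒜 : 𝒜.Pairwise fun A B => (A ∩ B).Finite) (a : 𝒜) (m : ℕ) :
    IsClosed (tail a m) := by
  refine isOpen_compl_iff.mp fun b hb => (h𝒜 b.2 a.2 ?_).subset fun k ⟨hkb, hk⟩ => ?_
  · exact fun hba => hb (ofSet_mem_tail.mpr (Subtype.ext hba))
  · simp only [mem_preimage, mem_compl_iff, not_not, ofNat_mem_tail] at hk
    exact ⟨hkb, hk.1⟩

theorem exists_tail_subset {U : Set (MrowkaSpace 𝒜)} (hU : IsOpen U) {a : 𝒜}
    (ha : ofSet a ∈ U) : ∃ m, tail a m ⊆ U := by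
  obtain ⟨m, hm⟩ := (hU a ha).bddAbove
  refine ⟨m + 1, ?_⟩
  rintro (b | k) hk
  · rwa [ofSet_mem_tail.mp hk]
  · rw [ofNat_mem_tail] at hk
    by_contra hkU
    exact absurd (hm ⟨hk.1, hkU⟩) (by omega)

def basis (𝒜 : Set (Set ℕ)) : Set (Set (MrowkaSpace 𝒜)) :=
  {U | (∃ n, U = {ofNat n}) ∨ ∃ a m, U = tail a m}

theorem isTopologicalBasis_basis : TopologicalSpace.IsTopologicalBasis (basis 𝒜) := by
  refine TopologicalSpace.isTopologicalBasis_of_isOpen_of_nhds ?_ fun x U hxU hU => ?_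
  · rintro _ (⟨n, rfl⟩ | ⟨a, m, rfl⟩)
    exacts [isOpen_singleton_ofNat n, isOpen_tail a m]
  · cases x with
    | ofNat n => exact ⟨{ofNat n}, .inl ⟨n, rfl⟩, rfl, singleton_subset_iff.mpr hxU⟩
    | ofSet a =>
      obtain ⟨m, hm⟩ := exists_tail_subset hU hxU
      exact ⟨tail a m, .inr ⟨a, m, rfl⟩, ofSet_mem_tail.mpr rfl, hm⟩

theorem completelyRegularSpace (h𝒜 : 𝒜.Pairwise fun A B => (A ∩ B).Finite) :
    CompletelyRegularSpace (MrowkaSpace 𝒜) := by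
  refine .of_isTopologicalBasis_clopens
    (isTopologicalBasis_basis.of_isOpen_of_subset (fun _ hU => hU.isOpen) ?_)
  rintro _ (⟨n, rfl⟩ | ⟨a, m, rfl⟩)
  exacts [⟨isClosed_singleton, isOpen_singleton_ofNat n⟩,
    ⟨isClosed_tail h𝒜 a m, isOpen_tail a m⟩]

theorem isUniformBaseAtNonIsolatedPoints_basis :
    IsUniformBaseAtNonIsolatedPoints (basis 𝒜) := by
  refine ⟨isTopologicalBasis_basis, fun x hx 𝒰 h𝒰 _ h𝒰inf U hxU hU => ?_⟩
  cases x with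
  | ofNat n => exact absurd (isOpen_singleton_ofNat n) hx
  | ofSet a =>
    obtain ⟨m, hm⟩ := exists_tail_subset hU hxU
    have hbad : {P ∈ 𝒰 | ¬P ⊆ U} ⊆ tail a '' Iio m := by
      rintro P ⟨hP𝒰, hPU⟩
      obtain ⟨⟨n, rfl⟩ | ⟨b, l, rfl⟩, haP⟩ := h𝒰 hP𝒰
      · simp at haP
      · obtain rfl := ofSet_mem_tail.mp haP
        exact ⟨l, not_le.mp fun hml => hPU ((tail_anti _ hml).trans hm), rfl⟩
    obtain ⟨P, hP𝒰, hPU⟩ :=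
      h𝒰inf.exists_notMem_finite (((finite_Iio m).image _).subset hbad)
    exact ⟨P, hP𝒰, not_not.mp fun hPU' => hPU ⟨hP𝒰, hPU'⟩⟩

def collapse : MrowkaSpace 𝒜 → OnePoint ℕ
  | ofSet _ => ∞
  | ofNat n => n

theorem continuous_collapse : Continuous (collapse (𝒜 := 𝒜)) := by
  refine continuous_def.mpr fun s hs a ha => ?_
  have hfin := ((OnePoint.isOpen_iff_of_mem ha).mp hs).2.finite_of_discrete
  exact hfin.subset fun k hk => hk.2

theorem surjective_collapse (h𝒜 : 𝒜.Nonempty) : Surjective (collapse (𝒜 := 𝒜)) := by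
  rintro (_ | n)
  exacts [⟨ofSet ⟨_, h𝒜.some_mem⟩, rfl⟩, ⟨ofNat n, rfl⟩]

theorem isClosedMap_collapse
    (h𝒜 : ∀ B : Set ℕ, B.Infinite → ∃ A ∈ 𝒜, (A ∩ B).Infinite) :
    IsClosedMap (collapse (𝒜 := 𝒜)) := by
  intro C hC
  by_cases hCset : ∃ a, ofSet a ∈ C
  · obtain ⟨a, ha⟩ := hCset
    rw [← isOpen_compl_iff, OnePoint.isOpen_iff_of_notMem (by simpa using ⟨_, ha, rfl⟩)]
    exact isOpen_discrete _
  · push Not at hCset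
    have hfin : (ofNat ⁻¹' C).Finite := by
      by_contra hinf
      obtain ⟨A, hA, hAC⟩ := h𝒜 _ hinf
      refine hAC ((hC.isOpen_compl ⟨A, hA⟩ (hCset ⟨A, hA⟩)).subset fun k ⟨hkA, hkC⟩ => ?_)
      exact ⟨hkA, not_not.mpr hkC⟩
    have himage : collapse '' C = ((↑) : ℕ → OnePoint ℕ) '' (ofNat ⁻¹' C) := by
      ext y
      constructor
      · rintro ⟨a | n, hC, rfl⟩
        exacts [absurd hC (hCset a), ⟨n, hC, rfl⟩]
      · rintro ⟨n, hn, rfl⟩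
        exact ⟨ofNat n, hn, rfl⟩
    exact himage ▸ (hfin.image _).isClosed

theorem preimage_collapse_infty : collapse ⁻¹' {∞} = range (ofSet (𝒜 := 𝒜)) := by
  ext (a | n) <;> simp [collapse]

theorem frontier_range_ofSet (h𝒜 : ∀ A ∈ 𝒜, A.Infinite) :
    frontier (range (ofSet (𝒜 := 𝒜))) = range ofSet := by
  have hclosed : IsClosed (range (ofSet (𝒜 := 𝒜))) :=
    isOpen_compl_iff.mp (isOpen_of_forall_ofSet_notMem fun a ha => ha ⟨a, rfl⟩)
  have hinterior : interior (range (ofSet (𝒜 := 𝒜))) = ∅ := by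
    refine eq_empty_of_forall_notMem fun x hx => ?_
    obtain ⟨a, rfl⟩ := interior_subset hx
    refine h𝒜 a a.2 ((isOpen_iff.mp isOpen_interior a hx).subset fun n hn => ⟨hn, fun hn' => ?_⟩)
    simpa using interior_subset hn'
  rw [hclosed.frontier_eq, hinterior, sdiff_empty]

theorem not_isCompact_range_ofSet (h𝒜 : 𝒜.Infinite) :
    ¬IsCompact (range (ofSet (𝒜 := 𝒜))) := by
  intro hcompact
  have hdiscrete : IsDiscrete (range (ofSet (𝒜 := 𝒜))) := by
    refine isDiscrete_iff_forall_mem_exists_isOpen.mpr ?_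
    rintro _ ⟨a, rfl⟩
    refine ⟨tail a 0, isOpen_tail a 0, ?_⟩
    ext (b | n) <;> simp
  have : Finite 𝒜 := (finite_range_iff fun _ _ => ofSet.inj).mp (hcompact.finite hdiscrete)
  exact h𝒜 (finite_coe_iff.mp this)

end MrowkaSpace

/-- Example 3.7: There is a closed map `f : X → Y`, where `X` is a regular space
with a uniform base at non-isolated points and `Y` is first-countable, such that
`f` is not boundary-compact. -/
theorem example_3_7 :
    ∃ (X Y : Type) (_ : TopologicalSpace X) (_ : TopologicalSpace Y) (f : X → Y),
      T2Space X ∧ T2Space Y ∧ RegularSpace X ∧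
      (∃ 𝒰 : Set (Set X), IsUniformBaseAtNonIsolatedPoints 𝒰) ∧
      FirstCountableTopology Y ∧
      Continuous f ∧ Function.Surjective f ∧ IsClosedMap f ∧
      ∃ y : Y, ¬ IsCompact (frontier (f ⁻¹' {y})) := by
  obtain ⟨𝒜, h𝒜, ⟨⟨hinf, hpairwise⟩, hmax⟩⟩ := exists_infinite_isMaxAlmostDisjoint
  have := MrowkaSpace.completelyRegularSpace hpairwise
  refine ⟨MrowkaSpace 𝒜, OnePoint ℕ, inferInstance, inferInstance, MrowkaSpace.collapse,
    inferInstance, inferInstance, inferInstance,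
    ⟨_, MrowkaSpace.isUniformBaseAtNonIsolatedPoints_basis⟩, inferInstance,
    MrowkaSpace.continuous_collapse, MrowkaSpace.surjective_collapse h𝒜.nonempty,
    MrowkaSpace.isClosedMap_collapse hmax, ∞, ?_⟩
  rw [MrowkaSpace.preimage_collapse_infty, MrowkaSpace.frontier_range_ofSet hinf]
  exact MrowkaSpace.not_isCompact_range_ofSet h𝒜
end

section
/- There exist a regular Hausdorff space X having a uniform base at non-isolated points, a Hausdorff space Y, and a continuous closed surjection f : X → Y such that for every σ-closed-discrete subset Z ⊆ Y there exists y ∈ Y \ Z with f⁻¹(y) not compact; in other words, spaces with a uniform base at non-isolated points do not satisfy the decomposition theorem. (Such an example is X = (Y × S₁) \ (D × {0}) with the projection onto Y, where Y = ψ(D) is the Isbell–Mrówka space over an uncountable set D and S₁ = {0} ∪ {1/n : n ∈ ℕ} ⊆ ℝ.) -/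
open Set Topology Filter Function

/-!
Take a maximal almost disjoint family `𝒜` of countably infinite subsets of `ℝ`, let `Y = ψ(ℝ)`
and let `f` be the first projection of `X = (Y × S₁) \ (ℝ × {0})`.

A closed discrete subset of `Y` contains only finitely many points of `ℝ`: infinitely many would
meet some `A ∈ 𝒜` in an infinite set, and would then accumulate at `A`. Hence a σ-closed-discrete
`Z ⊆ Y` misses some `d ∈ ℝ`, whose fiber `{d} × (S₁ \ {0})` is not compact. The map `f` is closed
because `S₁` is compact and the removed points lie over isolated points of `Y`. Finally, enumerate
each `A ∈ 𝒜` and let `V_k(A)` be `{A}` together with `A` minus its first `k` points. The sets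
`V_k(A) × {s}` for `s ≠ 0` and `V_k(A) × [0, 1/k)`, together with the isolated
points, form a base of `X`. Only finitely many of them contain a given non-isolated point without
lying in a given neighbourhood of it, so this base is uniform at non-isolated points.
-/

theorem IsUniformBaseAtNonIsolatedPoints.of_finite {X : Type*} [TopologicalSpace X]
    {𝒰 : Set (Set X)} (h𝒰 : TopologicalSpace.IsTopologicalBasis 𝒰)
    (hfin : ∀ x ∈ nonIsolatedPoints X, ∀ U ∈ 𝓝 x, {P ∈ 𝒰 | x ∈ P ∧ ¬P ⊆ U}.Finite) :
    IsUniformBaseAtNonIsolatedPoints 𝒰 := by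
  refine ⟨h𝒰, fun x hx 𝒰' h𝒰' _ hinf U hxU hU => ?_⟩
  obtain ⟨P, hP, hPbad⟩ := (hinf.sdiff (hfin x hx U (hU.mem_nhds hxU))).nonempty
  exact ⟨P, hP, by_contra fun hPU => hPbad ⟨(h𝒰' hP).1, (h𝒰' hP).2, hPU⟩⟩

theorem isClosedMap_fst_comp_val {Y K : Type*} [TopologicalSpace Y] [TopologicalSpace K]
    [CompactSpace K] {S : Set (Y × K)} (hS : ∀ p ∉ S, IsOpen ({p.1} : Set Y)) :
    IsClosedMap fun x : S => (x : Y × K).1 := by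
  intro F hF
  obtain ⟨C, hC, rfl⟩ := isClosed_induced_iff.mp hF
  suffices (fun x : S => (x : Y × K).1) '' (Subtype.val ⁻¹' C) = Prod.fst '' closure (S ∩ C) from
    this ▸ isClosedMap_fst_of_compactSpace _ isClosed_closure
  refine Subset.antisymm ?_ ?_
  · rintro _ ⟨x, hx, rfl⟩
    exact ⟨x, subset_closure ⟨x.2, hx⟩, rfl⟩
  · rintro _ ⟨p, hp, rfl⟩
    by_cases hpS : p ∈ S
    · exact ⟨⟨p, hpS⟩, hC.closure_subset (closure_mono inter_subset_right hp), rfl⟩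
    · -- `{p.1} × K` is a neighbourhood of `p`, so some point of `S ∩ C` lies over `p.1`
      obtain ⟨q, ⟨hq, -⟩, hqS, hqC⟩ := mem_closure_iff_nhds.mp hp _
        (((hS p hpS).prod isOpen_univ).mem_nhds ⟨rfl, trivial⟩)
      exact ⟨⟨q, hqS⟩, hqC, hq⟩

theorem Set.Finite.exists_subset_image_Iio {α : Type*} {f : ℕ → α} {G : Set α} (hG : G.Finite)
    (hGf : G ⊆ range f) : ∃ k, G ⊆ f '' Iio k := by
  have hmono : Monotone fun k => f '' Iio k := fun i j hij => image_mono (Iio_subset_Iio hij)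
  rw [← hG.coe_toFinset] at hGf ⊢
  refine hmono.directed_le.exists_mem_subset_of_finset_subset_biUnion ?_
  rwa [← image_iUnion, iUnion_Iio, image_univ]

theorem ENat.hasBasis_nhds_top :
    (𝓝 (⊤ : ℕ∞)).HasBasis (fun _ : ℕ => True) fun k => Ioi (k : ℕ∞) :=
  nhds_top_basis.to_hasBasis
    (fun a ha => ⟨a.toNat, trivial, by rw [ENat.natCast_toNat ha.ne]⟩)
    fun k _ => ⟨k, ENat.natCast_lt_top k, subset_rfl⟩

theorem ENat.not_isCompact_Iio_top : ¬IsCompact (Iio (⊤ : ℕ∞)) := fun h =>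
  lt_irrefl (⊤ : ℕ∞) <| h.isClosed.mem_of_tendsto ENat.tendsto_natCast_nhds_top
    (Eventually.of_forall ENat.natCast_lt_top)

/-- A maximal almost disjoint family of countably infinite subsets of `D`; maximality is stated
as: every infinite subset of `D` meets some member in an infinite set. -/
structure MadFamily (D : Type*) where
  sets : Set (Set D)
  countable : ∀ A ∈ sets, A.Countable
  infinite : ∀ A ∈ sets, A.Infinite
  pairwise_finite_inter : sets.Pairwise fun A B => (A ∩ B).Finite
  exists_infinite_inter : ∀ E : Set D, E.Infinite → ∃ A ∈ sets, (A ∩ E).Infinite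

namespace MadFamily

theorem nonempty (D : Type*) : Nonempty (MadFamily D) := by
  let S : Set (Set (Set D)) :=
    {𝒞 | (∀ A ∈ 𝒞, A.Countable ∧ A.Infinite) ∧ 𝒞.Pairwise fun A B => (A ∩ B).Finite}
  obtain ⟨𝒜, h𝒜⟩ := zorn_subset S fun c hcS hc =>
    ⟨⋃₀ c, ⟨fun A ⟨𝒞, h𝒞, hA⟩ => (hcS h𝒞).1 A hA,
      (pairwise_sUnion hc.directedOn).2 fun 𝒞 h𝒞 => (hcS h𝒞).2⟩, fun _ => subset_sUnion_of_mem⟩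
  refine ⟨⟨𝒜, fun A hA => (h𝒜.prop.1 A hA).1, fun A hA => (h𝒜.prop.1 A hA).2, h𝒜.prop.2,
    fun E hE => ?_⟩⟩
  by_contra! hfin
  -- a countably infinite `E' ⊆ E` could be added to `𝒜`
  let E' := range (Subtype.val ∘ hE.natEmbedding E)
  have hE'E : E' ⊆ E := range_subset_iff.2 fun n => (hE.natEmbedding E n).2
  have hE' : E'.Infinite :=
    infinite_range_of_injective (Subtype.val_injective.comp (hE.natEmbedding E).injective)
  have hfin' : ∀ A ∈ 𝒜, (A ∩ E').Finite := fun A hA =>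
    (hfin A hA).subset (inter_subset_inter_right A hE'E)
  have hins : insert E' 𝒜 ∈ S := by
    refine ⟨forall_mem_insert.2 ⟨⟨countable_range _, hE'⟩, h𝒜.prop.1⟩,
      pairwise_insert.2 ⟨h𝒜.prop.2, fun B hB _ => ⟨?_, hfin' B hB⟩⟩⟩
    rw [inter_comm]
    exact hfin' B hB
  have hE'𝒜 : E' ∈ 𝒜 := h𝒜.eq_of_subset hins (subset_insert _ _) ▸ mem_insert _ _
  exact hE' (by simpa using hfin' E' hE'𝒜)

variable {D : Type*} (𝒜 : MadFamily D)

noncomputable def enum (A : 𝒜.sets) : ℕ → D :=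
  ((𝒜.countable A A.2).exists_eq_range (𝒜.infinite A A.2).nonempty).choose

theorem range_enum (A : 𝒜.sets) : range (𝒜.enum A) = A :=
  ((𝒜.countable A A.2).exists_eq_range (𝒜.infinite A A.2).nonempty).choose_spec.symm

end MadFamily

inductive IsbellMrowka {D : Type*} (𝒜 : MadFamily D)
  | ofSet : 𝒜.sets → IsbellMrowka 𝒜
  | ofPt : D → IsbellMrowka 𝒜

namespace IsbellMrowka

variable {D : Type*} {𝒜 : MadFamily D}

-- the topology generated by the isolated points of `D` and the sets `{A} ∪ (A \ F)`, `F` finite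
instance : TopologicalSpace (IsbellMrowka 𝒜) where
  IsOpen U := ∀ A : 𝒜.sets, ofSet A ∈ U → ((A : Set D) \ ofPt ⁻¹' U).Finite
  isOpen_univ _ _ := by simp
  isOpen_inter U V hU hV A hA := by
    rw [preimage_inter, sdiff_inter]
    exact (hU A hA.1).union (hV A hA.2)
  isOpen_sUnion S hS := by
    rintro A ⟨U, hUS, hAU⟩
    exact (hS U hUS A hAU).subset
      (sdiff_subset_sdiff_right (preimage_mono (subset_sUnion_of_mem hUS)))

theorem isOpen_iff {U : Set (IsbellMrowka 𝒜)} :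
    IsOpen U ↔ ∀ A : 𝒜.sets, ofSet A ∈ U → ((A : Set D) \ ofPt ⁻¹' U).Finite :=
  Iff.rfl

theorem ofPt_injective : Injective (ofPt : D → IsbellMrowka 𝒜) := fun _ _ => ofPt.inj

theorem isOpen_singleton_ofPt (d : D) : IsOpen ({ofPt d} : Set (IsbellMrowka 𝒜)) := by
  simp [isOpen_iff]

instance : T1Space (IsbellMrowka 𝒜) where
  t1 y := ⟨fun A _ => by
    simpa [sdiff_compl] using
      ((subsingleton_singleton.preimage ofPt_injective).finite).inter_of_right (A : Set D)⟩

def basicNhd (A : 𝒜.sets) (k : ℕ) : Set (IsbellMrowka 𝒜) :=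
  insert (ofSet A) (ofPt '' ((A : Set D) \ 𝒜.enum A '' Iio k))

@[simp]
theorem ofSet_mem_basicNhd {A B : 𝒜.sets} {k : ℕ} : ofSet B ∈ basicNhd A k ↔ B = A := by
  simp [basicNhd]

@[simp]
theorem preimage_ofPt_basicNhd (A : 𝒜.sets) (k : ℕ) :
    ofPt ⁻¹' basicNhd A k = (A : Set D) \ 𝒜.enum A '' Iio k := by
  ext d
  simp [basicNhd]

theorem basicNhd_antitone (A : 𝒜.sets) : Antitone (basicNhd A) := fun _ _ hkl =>
  insert_subset_insert <| image_mono <| sdiff_subset_sdiff_right <| image_mono <| Iio_subset_Iio hkl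

theorem isOpen_basicNhd (A : 𝒜.sets) (k : ℕ) : IsOpen (basicNhd A k) := by
  rintro B hB
  obtain rfl := ofSet_mem_basicNhd.mp hB
  rw [preimage_ofPt_basicNhd, sdiff_sdiff_right_self]
  exact ((finite_Iio k).image _).subset inter_subset_right

theorem isClosed_basicNhd (A : 𝒜.sets) (k : ℕ) : IsClosed (basicNhd A k) := by
  refine ⟨fun B hB => ?_⟩
  have hBA : (B : Set D) ≠ A := fun h => hB (ofSet_mem_basicNhd.mpr (Subtype.ext h))
  rw [preimage_compl, sdiff_compl, preimage_ofPt_basicNhd]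
  exact (𝒜.pairwise_finite_inter B.2 A.2 hBA).subset (inter_subset_inter_right _ sdiff_subset)

theorem hasBasis_nhds_ofSet (A : 𝒜.sets) :
    (𝓝 (ofSet A : IsbellMrowka 𝒜)).HasBasis (fun _ => True) (basicNhd A) := by
  refine (nhds_basis_opens _).to_hasBasis (fun U ⟨hAU, hU⟩ => ?_)
    fun k _ => ⟨_, ⟨mem_insert _ _, isOpen_basicNhd A k⟩, subset_rfl⟩
  obtain ⟨k, hk⟩ := (hU A hAU).exists_subset_image_Iio (sdiff_subset.trans (𝒜.range_enum A).ge)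
  refine ⟨k, trivial, insert_subset hAU (image_subset_iff.mpr fun d ⟨hdA, hdk⟩ => ?_)⟩
  by_contra hdU
  exact hdk (hk ⟨hdA, hdU⟩)

instance : RegularSpace (IsbellMrowka 𝒜) := by
  refine .of_exists_mem_nhds_isClosed_subset fun x s hs => ?_
  cases x with
  | ofSet A =>
    obtain ⟨k, -, hk⟩ := (hasBasis_nhds_ofSet A).mem_iff.mp hs
    exact ⟨_, (hasBasis_nhds_ofSet A).mem_of_mem trivial, isClosed_basicNhd A k, hk⟩
  | ofPt d =>
    exact ⟨_, (isOpen_singleton_ofPt d).mem_nhds rfl, isClosed_singleton,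
      singleton_subset_iff.mpr (mem_of_mem_nhds hs)⟩

theorem exists_ofPt_mem_of_infinite {U : Set (IsbellMrowka 𝒜)} (hU : IsOpen U) {A : 𝒜.sets}
    (hAU : ofSet A ∈ U) {E : Set D} (hE : ((A : Set D) ∩ E).Infinite) : ∃ e ∈ E, ofPt e ∈ U := by
  obtain ⟨e, ⟨heA, heE⟩, he⟩ := (hE.sdiff (hU A hAU)).nonempty
  exact ⟨e, heE, by_contra fun heU => he ⟨heA, heU⟩⟩

theorem finite_preimage_ofPt_of_isClosed_of_discrete {Z : Set (IsbellMrowka 𝒜)}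
    (hZ : IsClosed Z) (hdisc : ∀ y ∈ Z, ∃ U, IsOpen U ∧ y ∈ U ∧ U ∩ Z = {y}) :
    (ofPt ⁻¹' Z).Finite := by
  by_contra hinf
  obtain ⟨A, hA, hAZ⟩ := 𝒜.exists_infinite_inter _ hinf
  have hmem : ofSet ⟨A, hA⟩ ∈ Z := hZ.closure_subset <| mem_closure_iff.mpr fun U hU hAU =>
    let ⟨e, heZ, heU⟩ := exists_ofPt_mem_of_infinite hU hAU hAZ
    ⟨_, heU, heZ⟩
  obtain ⟨U, hU, hAU, hUZ⟩ := hdisc _ hmem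
  obtain ⟨e, heZ, heU⟩ := exists_ofPt_mem_of_infinite hU hAU hAZ
  have : ofPt e ∈ U ∩ Z := ⟨heU, heZ⟩
  simp [hUZ] at this

variable (𝒜) in
/-- `(ψ(D) × S₁) \ (D × {0})`, where `S₁ = {0} ∪ {1/n : n ∈ ℕ}` is encoded as `ℕ∞`, with `⊤`
playing the role of `0`. -/
def cylinder : Set (IsbellMrowka 𝒜 × ℕ∞) := (range ofPt ×ˢ {⊤})ᶜ

theorem surjective_cylinder_fst : Surjective fun x : cylinder 𝒜 => (x : IsbellMrowka 𝒜 × ℕ∞).1 :=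
  fun y => ⟨⟨(y, 0), by simp [cylinder]⟩, rfl⟩

theorem isClosedMap_cylinder_fst : IsClosedMap fun x : cylinder 𝒜 => (x : IsbellMrowka 𝒜 × ℕ∞).1 :=
  isClosedMap_fst_comp_val fun _ hp => by
    obtain ⟨⟨d, hd⟩, -⟩ := not_not.mp hp
    exact hd ▸ isOpen_singleton_ofPt d

theorem not_isCompact_cylinder_fiber (d : D) :
    ¬IsCompact ((fun x : cylinder 𝒜 => (x : IsbellMrowka 𝒜 × ℕ∞).1) ⁻¹' {ofPt d}) := by
  have himage : (fun x : cylinder 𝒜 => (x : IsbellMrowka 𝒜 × ℕ∞).2) ''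
      ((fun x : cylinder 𝒜 => (x : IsbellMrowka 𝒜 × ℕ∞).1) ⁻¹' {ofPt d}) = Iio ⊤ := by
    ext s
    constructor
    · rintro ⟨⟨⟨_, s⟩, hs⟩, rfl, rfl⟩
      simpa [cylinder, lt_top_iff_ne_top] using hs
    · exact fun hs => ⟨⟨(ofPt d, s), by simpa [cylinder, lt_top_iff_ne_top] using hs⟩, rfl, rfl⟩
  exact fun h => ENat.not_isCompact_Iio_top <|
    himage ▸ h.image (continuous_snd.comp continuous_subtype_val)

theorem isOpen_singleton_of_fst_eq_ofPt {x : cylinder 𝒜} {d : D} (hx : x.1.1 = ofPt d) :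
    IsOpen {x} := by
  have hs : x.1.2 ≠ ⊤ := fun hs => x.2 ⟨⟨d, hx.symm⟩, hs⟩
  have hx' : ({x} : Set (cylinder 𝒜)) = Subtype.val ⁻¹' ({ofPt d} ×ˢ {x.1.2}) := by
    ext y
    simp [← hx, Prod.ext_iff, Subtype.ext_iff]
  rw [hx']
  exact ((isOpen_singleton_ofPt d).prod (ENat.isOpen_singleton hs)).preimage continuous_subtype_val

def slice (A : 𝒜.sets) (k m : ℕ) : Set (cylinder 𝒜) :=
  Subtype.val ⁻¹' (basicNhd A k ×ˢ {(m : ℕ∞)})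

def tube (A : 𝒜.sets) (k : ℕ) : Set (cylinder 𝒜) :=
  Subtype.val ⁻¹' (basicNhd A k ×ˢ Ioi (k : ℕ∞))

theorem hasBasis_nhds_slice {A : 𝒜.sets} {m : ℕ} {x : cylinder 𝒜} (hx : x.1 = (ofSet A, (m : ℕ∞))) :
    (𝓝 x).HasBasis (fun _ => True) fun k => slice A k m := by
  have hpure : (pure (m : ℕ∞) : Filter ℕ∞).HasBasis (fun _ : ℕ => True) fun _ => {(m : ℕ∞)} :=
    ⟨fun t => by simp⟩
  rw [nhds_subtype, hx, nhds_prod_eq, ENat.nhds_natCast]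
  exact ((hasBasis_nhds_ofSet A).prod_same_index_anti hpure
    ((basicNhd_antitone A).antitoneOn _) antitoneOn_const).comap _

theorem hasBasis_nhds_tube {A : 𝒜.sets} {x : cylinder 𝒜} (hx : x.1 = (ofSet A, ⊤)) :
    (𝓝 x).HasBasis (fun _ => True) (tube A) := by
  rw [nhds_subtype, hx, nhds_prod_eq]
  exact ((hasBasis_nhds_ofSet A).prod_same_index_anti ENat.hasBasis_nhds_top
    ((basicNhd_antitone A).antitoneOn _)
    fun _ _ _ _ hkl => Ioi_subset_Ioi (Nat.cast_le.mpr hkl)).comap _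

theorem tube_antitone (A : 𝒜.sets) : Antitone (tube (𝒜 := 𝒜) A) := fun _ _ hkl =>
  preimage_mono <| prod_mono (basicNhd_antitone A hkl) (Ioi_subset_Ioi (Nat.cast_le.mpr hkl))

theorem slice_antitone (A : 𝒜.sets) (m : ℕ) : Antitone fun k => slice (𝒜 := 𝒜) A k m :=
  fun _ _ hkl => preimage_mono <| prod_mono (basicNhd_antitone A hkl) subset_rfl

variable (𝒜) in
def cylinderBasis : Set (Set (cylinder 𝒜)) :=
  {P | (∃ x, IsOpen {x} ∧ P = {x}) ∨ (∃ A k m, P = slice A k m) ∨ ∃ A k, P = tube A k}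

theorem isTopologicalBasis_cylinderBasis :
    TopologicalSpace.IsTopologicalBasis (cylinderBasis 𝒜) := by
  refine TopologicalSpace.isTopologicalBasis_of_isOpen_of_nhds ?_ fun x U hxU hU => ?_
  · rintro P (⟨x, hx, rfl⟩ | ⟨A, k, m, rfl⟩ | ⟨A, k, rfl⟩)
    · exact hx
    · exact ((isOpen_basicNhd A k).prod (ENat.isOpen_singleton (ENat.natCast_ne_top m))).preimage
        continuous_subtype_val
    · exact ((isOpen_basicNhd A k).prod isOpen_Ioi).preimage continuous_subtype_val
  obtain ⟨⟨y, s⟩, hys⟩ := x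
  cases y with
  | ofPt d =>
    exact ⟨_, Or.inl ⟨_, isOpen_singleton_of_fst_eq_ofPt rfl, rfl⟩, rfl,
      singleton_subset_iff.mpr hxU⟩
  | ofSet A =>
    cases s using ENat.recTopCoe with
    | top =>
      obtain ⟨k, -, hk⟩ := (hasBasis_nhds_tube rfl).mem_iff.mp (hU.mem_nhds hxU)
      exact ⟨_, Or.inr (Or.inr ⟨A, k, rfl⟩),
        mem_of_mem_nhds ((hasBasis_nhds_tube rfl).mem_of_mem trivial), hk⟩
    | coe m =>
      obtain ⟨k, -, hk⟩ := (hasBasis_nhds_slice rfl).mem_iff.mp (hU.mem_nhds hxU)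
      exact ⟨_, Or.inr (Or.inl ⟨A, k, m, rfl⟩),
        mem_of_mem_nhds ((hasBasis_nhds_slice rfl).mem_of_mem trivial), hk⟩

theorem finite_cylinderBasis_not_subset_of_top {A : 𝒜.sets} {x : cylinder 𝒜}
    (hx : x.1 = (ofSet A, ⊤)) (hx_iso : ¬IsOpen {x}) {U : Set (cylinder 𝒜)} (hU : U ∈ 𝓝 x) :
    {P ∈ cylinderBasis 𝒜 | x ∈ P ∧ ¬P ⊆ U}.Finite := by
  obtain ⟨k₀, -, hk₀⟩ := (hasBasis_nhds_tube hx).mem_iff.mp hU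
  refine ((finite_Iio k₀).image (tube A)).subset ?_
  rintro P ⟨⟨x', hx', rfl⟩ | ⟨B, k, m, rfl⟩ | ⟨B, k, rfl⟩, hxP, hPU⟩
  · exact absurd (mem_singleton_iff.mp hxP ▸ hx') hx_iso
  · simp [slice, hx] at hxP
  · obtain rfl : A = B := by simpa [tube, hx] using hxP
    exact ⟨k, lt_of_not_ge fun hk => hPU ((tube_antitone A hk).trans hk₀), rfl⟩

theorem finite_cylinderBasis_not_subset_of_coe {A : 𝒜.sets} {m : ℕ} {x : cylinder 𝒜}
    (hx : x.1 = (ofSet A, (m : ℕ∞))) (hx_iso : ¬IsOpen {x}) {U : Set (cylinder 𝒜)} (hU : U ∈ 𝓝 x) :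
    {P ∈ cylinderBasis 𝒜 | x ∈ P ∧ ¬P ⊆ U}.Finite := by
  obtain ⟨k₀, -, hk₀⟩ := (hasBasis_nhds_slice hx).mem_iff.mp hU
  refine (((finite_Iio k₀).image fun k => slice A k m).union
    ((finite_Iio m).image (tube A))).subset ?_
  rintro P ⟨⟨x', hx', rfl⟩ | ⟨B, k, m', rfl⟩ | ⟨B, k, rfl⟩, hxP, hPU⟩
  · exact absurd (mem_singleton_iff.mp hxP ▸ hx') hx_iso
  · obtain ⟨rfl, rfl⟩ : A = B ∧ m = m' := by simpa [slice, hx] using hxP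
    exact Or.inl ⟨k, lt_of_not_ge fun hk => hPU ((slice_antitone A m hk).trans hk₀), rfl⟩
  · obtain ⟨rfl, hkm⟩ : A = B ∧ k < m := by simpa [tube, hx] using hxP
    exact Or.inr ⟨k, hkm, rfl⟩

theorem isUniformBase_cylinderBasis : IsUniformBaseAtNonIsolatedPoints (cylinderBasis 𝒜) := by
  refine .of_finite isTopologicalBasis_cylinderBasis fun x hx U hU => ?_
  obtain ⟨⟨y, s⟩, hys⟩ := x
  cases y with
  | ofPt d => exact absurd (isOpen_singleton_of_fst_eq_ofPt rfl) hx
  | ofSet A =>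
    cases s using ENat.recTopCoe with
    | top => exact finite_cylinderBasis_not_subset_of_top rfl hx hU
    | coe m => exact finite_cylinderBasis_not_subset_of_coe rfl hx hU

end IsbellMrowka

/-- Example 3.8: There are a regular space `X` with a uniform base at non-isolated
points and a closed map `f : X → Y` which does not satisfy the decomposition
theorem: for every σ-closed-discrete `Z ⊆ Y` some fiber over `Y \ Z` is
non-compact. -/
theorem example_3_8 :
    ∃ (X Y : Type) (_ : TopologicalSpace X) (_ : TopologicalSpace Y) (f : X → Y),
      T2Space X ∧ T2Space Y ∧ RegularSpace X ∧
      (∃ 𝒰 : Set (Set X), IsUniformBaseAtNonIsolatedPoints 𝒰) ∧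
      Continuous f ∧ Function.Surjective f ∧ IsClosedMap f ∧
      ∀ Z : Set Y,
        (∃ Zs : ℕ → Set Y, Z = (⋃ n, Zs n) ∧
          ∀ n, IsClosed (Zs n) ∧
            ∀ y ∈ Zs n, ∃ U : Set Y, IsOpen U ∧ y ∈ U ∧ U ∩ Zs n = {y}) →
        ∃ y ∉ Z, ¬ IsCompact (f ⁻¹' {y}) := by
  obtain ⟨𝒜⟩ := MadFamily.nonempty ℝ
  refine ⟨IsbellMrowka.cylinder 𝒜, IsbellMrowka 𝒜, inferInstance, inferInstance, fun x => x.1.1,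
    inferInstance, inferInstance, inferInstance, ⟨_, IsbellMrowka.isUniformBase_cylinderBasis⟩,
    continuous_fst.comp continuous_subtype_val, IsbellMrowka.surjective_cylinder_fst,
    IsbellMrowka.isClosedMap_cylinder_fst, ?_⟩
  rintro Z ⟨Zs, rfl, hZs⟩
  have hcount : (⋃ n, IsbellMrowka.ofPt ⁻¹' Zs n).Countable := countable_iUnion fun n =>
    (IsbellMrowka.finite_preimage_ofPt_of_isClosed_of_discrete (hZs n).1 (hZs n).2).countable
  obtain ⟨d, hd⟩ := (ne_univ_iff_exists_notMem (⋃ n, IsbellMrowka.ofPt ⁻¹' Zs n)).mp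
    fun h => not_countable_univ (h ▸ hcount)
  exact ⟨.ofPt d, by simpa using hd, IsbellMrowka.not_isCompact_cylinder_fiber d⟩
end
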